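/- If travel times satisfy the triangle inequality and a partial path's label L1 same-day dominates label L2 with strict inequality in reduced cost, then L2 cannot be the prefix of any route that is uniquely optimal among routes in the full route set: for any completion of L2 into a feasible route, the same completion applied to L1 yields a feasible route with strictly smaller reduced cost. -/

import Mathlib

open scoped BigOperators

/-- A label of the labeling algorithm: current node, accumulated time, accumulated
reduced cost, day, set of visited clients, compartment loads, compartment client
sets, daily working time and daily driving distance. -/
structure Label (V C : Type) where
  node : V
  t : ℝ
  cbar : ℝ
  day : ℕ
  S : Set V
  load : C → ℝ
  O : C → Set V
  g : ℝ
  o : ℝ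

/-- Problem data: travel times, service times, arc reduced costs, time-window
bounds, distances, demands, compartment capacities, total capacity, daily working
time limit T, daily driving limit Dist, and break duration B. -/
structure Params (V C : Type) where
  tt : V → V → ℝ
  u : V → ℝ
  rc : V → V → ℝ
  ws : V → ℝ
  we : V → ℝ
  dst : V → V → ℝ
  Q : V → ℝ
  cap : C → ℝ
  Ltot : ℝ
  T : ℝ
  DistMax : ℝ
  B : ℝ

/-- Resource extension along an arc to node `st.1`, with compartment choice
`st.2.1` and break indicator `st.2.2`. -/
def extendLabel {V C : Type} [DecidableEq C] (P : Params V C) (L : Label V C)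
    (st : V × C × Bool) : Label V C :=
  { node := st.1
    t := max (L.t + P.tt L.node st.1 + P.u L.node + (if st.2.2 then P.B else 0)) (P.ws st.1)
    cbar := L.cbar + P.rc L.node st.1
    day := L.day + (if st.2.2 then 1 else 0)
    S := L.S ∪ {st.1}
    load := Function.update L.load st.2.1 (L.load st.2.1 + P.Q st.1)
    O := Function.update L.O st.2.1 (L.O st.2.1 ∪ {st.1})
    g := if st.2.2 then 0 else L.g + P.tt L.node st.1 + P.u L.node
    o := if st.2.2 then 0 else L.o + P.dst L.node st.1 }

/-- Feasibility of a single extension: time-window upper bound, compartment and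
total capacities, elementarity, and daily working-time and driving limits. -/
def feasStep {V C : Type} [DecidableEq C] [Fintype C] (P : Params V C)
    (L : Label V C) (st : V × C × Bool) : Prop :=
  (extendLabel P L st).t ≤ P.we st.1 ∧
  (∀ m, (extendLabel P L st).load m ≤ P.cap m) ∧
  (∑ m, (extendLabel P L st).load m) ≤ P.Ltot ∧
  st.1 ∉ L.S ∧
  (extendLabel P L st).g ≤ P.T ∧
  (extendLabel P L st).o ≤ P.DistMax

/-- Feasibility of a sequence of extensions. -/
def feasSeq {V C : Type} [DecidableEq C] [Fintype C] (P : Params V C) :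
    Label V C → List (V × C × Bool) → Prop
  | _, [] => True
  | L, st :: rest => feasStep P L st ∧ feasSeq P (extendLabel P L st) rest

/-- The label obtained after applying a sequence of extensions. -/
def applySeq {V C : Type} [DecidableEq C] (P : Params V C) (L : Label V C)
    (steps : List (V × C × Bool)) : Label V C :=
  steps.foldl (extendLabel P) L

/-- Same-day dominance of `L1` over `L2`. -/
def SameDayDom {V C : Type} (L1 L2 : Label V C) : Prop :=
  L1.node = L2.node ∧ L1.day = L2.day ∧ L1.t ≤ L2.t ∧ L1.cbar ≤ L2.cbar ∧
  L1.g ≤ L2.g ∧ L1.o ≤ L2.o ∧ L1.S ⊆ L2.S ∧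
  (∀ m, L1.load m ≤ L2.load m) ∧ (∀ m, L1.O m ⊆ L2.O m)

/-- Inter-day dominance of `L1` over `L2` with break duration `B`. -/
def InterDayDom {V C : Type} (B : ℝ) (L1 L2 : Label V C) : Prop :=
  L1.node = L2.node ∧ L1.t ≤ L2.t - B ∧ L1.cbar ≤ L2.cbar ∧ L1.day < L2.day ∧
  L1.S ⊆ L2.S ∧ (∀ m, L1.load m ≤ L2.load m) ∧ (∀ m, L1.O m ⊆ L2.O m)

/-!
Same-day dominance is preserved by every extension, because each resource extension is
monotone in the label and the break indicator resets `g` and `o` for both labels alike;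
feasibility of a step is monotone in the same resources, so any completion feasible for `L2`
is feasible for `L1`. Reduced costs of arcs depend only on the arc, so a completion shifts
both costs by the same amount and the strict gap survives.
-/

namespace SameDayDom

variable {V C : Type} [DecidableEq C] {L1 L2 : Label V C}

theorem extendLabel (P : Params V C) (h : SameDayDom L1 L2) (st : V × C × Bool) :
    SameDayDom (_root_.extendLabel P L1 st) (_root_.extendLabel P L2 st) := by
  obtain ⟨hn, hd, ht, hc, hg, ho, hS, hl, hO⟩ := h
  obtain ⟨v, m, _⟩ := st
  simp only [SameDayDom, _root_.extendLabel, hn, hd, true_and]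
  refine ⟨max_le_max (by linarith) le_rfl, by linarith, ?_, ?_,
    Set.union_subset_union_left _ hS,
    update_le_update_iff.2 ⟨by linarith [hl m], fun j _ => hl j⟩,
    update_le_update_iff.2 ⟨Set.union_subset_union_left _ (hO m), fun j _ => hO j⟩⟩
  all_goals split_ifs <;> linarith

theorem feasStep [Fintype C] (P : Params V C) (h : SameDayDom L1 L2) {st : V × C × Bool}
    (hf : feasStep P L2 st) : _root_.feasStep P L1 st := by
  obtain ⟨-, -, ht, -, hg, ho, -, hl, -⟩ := h.extendLabel P st
  obtain ⟨-, -, -, -, -, -, hS, -, -⟩ := h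
  obtain ⟨hwe, hcap, htot, hnew, hT, hDist⟩ := hf
  exact ⟨ht.trans hwe, fun m => (hl m).trans (hcap m),
    (Finset.sum_le_sum fun m _ => hl m).trans htot, fun hv => hnew (hS hv),
    hg.trans hT, ho.trans hDist⟩

theorem feasSeq [Fintype C] (P : Params V C) (h : SameDayDom L1 L2)
    {steps : List (V × C × Bool)} (hf : feasSeq P L2 steps) : _root_.feasSeq P L1 steps := by
  induction steps generalizing L1 L2 with
  | nil => trivial
  | cons st rest ih => exact ⟨h.feasStep P hf.1, ih (h.extendLabel P st) hf.2⟩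

end SameDayDom

theorem applySeq_cbar_sub_cbar {V C : Type} [DecidableEq C] (P : Params V C)
    {L1 L2 : Label V C} (hn : L1.node = L2.node) (steps : List (V × C × Bool)) :
    (applySeq P L1 steps).cbar - (applySeq P L2 steps).cbar = L1.cbar - L2.cbar := by
  induction steps generalizing L1 L2 with
  | nil => rfl
  | cons st rest ih =>
    calc (applySeq P L1 (st :: rest)).cbar - (applySeq P L2 (st :: rest)).cbar
        = (extendLabel P L1 st).cbar - (extendLabel P L2 st).cbar := ih rfl
      _ = L1.cbar - L2.cbar := by simp only [extendLabel, hn]; ring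

/-- If `L1` same-day dominates `L2` with strict inequality in
reduced cost, then any completion of `L2` into a feasible route ending at the
sink `δ` applied to `L1` is also feasible and yields a route with strictly
smaller reduced cost, so `L2` cannot be the prefix of a uniquely optimal route. -/
theorem strict_dominance_excludes_optimal_prefix {V C : Type} [DecidableEq C]
    [Fintype C] (P : Params V C) (δ : V) (L1 L2 : Label V C)
    (hdom : SameDayDom L1 L2) (hstrict : L1.cbar < L2.cbar) :
    ∀ steps : List (V × C × Bool),
      (applySeq P L2 steps).node = δ → feasSeq P L2 steps →
      feasSeq P L1 steps ∧
        (applySeq P L1 steps).cbar < (applySeq P L2 steps).cbar := by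
  intro steps _ hfeas
  have hcost := applySeq_cbar_sub_cbar P hdom.1 steps
  exact ⟨hdom.feasSeq P hfeas, by linarith⟩
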